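/- arXiv:2007.09340 — 6 statements merged into one kernel-verified Lean document; each statement's English description precedes it below -/
import Mathlib

section
/- For a timed automorphism π and reals x, y, and any integer z and comparison relation ∼ ∈ {<, ≤, =, ≥, >}: x - y ∼ z holds if and only if π(x) - π(y) ∼ z holds. -/
/-- A timed automorphism: a monotone bijection `π : ℝ → ℝ` with `π (x+1) = π x + 1`. -/
def IsTimedAutomorphism (π : ℝ → ℝ) : Prop :=
  Function.Bijective π ∧ StrictMono π ∧ ∀ x : ℝ, π (x + 1) = π x + 1

/-- An `S`-timed automorphism: a timed automorphism fixing every point of `S`. -/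
def IsSTimedAutomorphism (S : Set ℝ) (π : ℝ → ℝ) : Prop :=
  IsTimedAutomorphism π ∧ ∀ t ∈ S, π t = t

/-- A timed word: a finite sequence of letters with nonnegative, nondecreasing timestamps. -/
def IsTimedWord {A : Type*} (w : List (A × ℝ)) : Prop :=
  (∀ p ∈ w, 0 ≤ p.2) ∧ (w.map Prod.snd).Chain' (· ≤ ·)

/-- Pointwise action of a real function on the timestamps of a timed word. -/
def mapTW {A : Type*} (π : ℝ → ℝ) (w : List (A × ℝ)) : List (A × ℝ) :=
  w.map fun p => (p.1, π p.2)

/-! A strictly monotone map commuting with `t ↦ t + 1` commutes with every integer shift `t ↦ t + z`,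
hence preserves `cmp (x - y) z`; each of the five relations is a function of `cmp`. -/

theorem iff_of_cmp_eq_cmp_of_mem {α : Type*} [LinearOrder α] {r : α → α → Prop}
    (hr : r ∈ ({(· < ·), (· ≤ ·), (· = ·), (· ≥ ·), (· > ·)} : Set (α → α → Prop)))
    {a b c d : α} (h : cmp a b = cmp c d) : r a b ↔ r c d := by
  rcases hr with rfl | rfl | rfl | rfl | rfl
  exacts [lt_iff_lt_of_cmp_eq_cmp h, le_iff_le_of_cmp_eq_cmp h, eq_iff_eq_of_cmp_eq_cmp h,
    le_iff_le_of_cmp_eq_cmp (cmp_eq_cmp_symm.1 h), lt_iff_lt_of_cmp_eq_cmp (cmp_eq_cmp_symm.1 h)]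

theorem cmp_sub_intCast_eq_of_map_add_one {α : Type*} [AddCommGroupWithOne α] [LinearOrder α]
    [IsOrderedAddMonoid α] {f : α → α} (hf : StrictMono f) (hf_one : ∀ x, f (x + 1) = f x + 1)
    (x y : α) (z : ℤ) : cmp (f x - f y) z = cmp (x - y) z := by
  have hf_int : f (y + z) = f y + z :=
    AddConstMapClass.map_add_int (⟨f, hf_one⟩ : AddConstMap α α 1 1) y z
  calc cmp (f x - f y) z = cmp (f x) (f (y + z)) := by
        rw [← cmp_add_right _ _ (f y), sub_add_cancel, hf_int, add_comm (z : α)]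
    _ = cmp x (y + z) := hf.cmp_map_eq x (y + z)
    _ = cmp (x - y) z := by rw [← cmp_add_right (x - y) _ y, sub_add_cancel, add_comm (z : α)]

/-- Timed automorphisms preserve comparisons of differences with integer constants,
for every comparison relation `∼ ∈ {<, ≤, =, ≥, >}`. -/
theorem timed_automorphism_preserves_clock_comparisons
    (π : ℝ → ℝ) (hπ : IsTimedAutomorphism π) (x y : ℝ) (z : ℤ)
    (r : ℝ → ℝ → Prop)
    (hr : r ∈ ({(· < ·), (· ≤ ·), (· = ·), (· ≥ ·), (· > ·)} : Set (ℝ → ℝ → Prop))) :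
    r (x - y) (z : ℝ) ↔ r (π x - π y) (z : ℝ) :=
  iff_of_cmp_eq_cmp_of_mem hr (cmp_sub_intCast_eq_of_map_add_one hπ.2.1 hπ.2.2 x y z).symm
end

section
/- Let S ⊆ ℝ≥0 be finite and u ∈ ℝ≥0. The S-orbit of u (the set {π(u) : π an S-timed automorphism}) is either the singleton {u}, which happens exactly when the fractional part of u belongs to the set of fractional parts of elements of S, or an open interval whose endpoints are of the form t + z with t ∈ S and z ∈ ℤ (or ±∞ appropriately when S is empty of relevant points). -/
open Set Int Filter

namespace IsTimedAutomorphism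

theorem map_add_int {π : ℝ → ℝ} (hπ : IsTimedAutomorphism π) (x : ℝ) (z : ℤ) :
    π (x + z) = π x + z :=
  CircleDeg1Lift.map_add_int ⟨⟨π, hπ.2.1.monotone⟩, hπ.2.2⟩ x z

theorem comp {π σ : ℝ → ℝ} (hπ : IsTimedAutomorphism π) (hσ : IsTimedAutomorphism σ) :
    IsTimedAutomorphism (π ∘ σ) :=
  ⟨hπ.1.comp hσ.1, hπ.2.1.comp hσ.2.1, fun x => by simp only [Function.comp, hσ.2.2, hπ.2.2]⟩

theorem add_const (c : ℝ) : IsTimedAutomorphism (· + c) :=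
  ⟨(Equiv.addRight c).bijective, strictMono_id.add_const c, fun x => add_right_comm x 1 c⟩

theorem floor_add_comp_fract {φ : ℝ → ℝ} (hmono : StrictMonoOn φ (Icc 0 1))
    (hcont : ContinuousOn φ (Icc 0 1)) (h0 : φ 0 = 0) (h1 : φ 1 = 1) :
    IsTimedAutomorphism fun x => ⌊x⌋ + φ (fract x) := by
  have hmem (x : ℝ) : fract x ∈ Icc (0 : ℝ) 1 := ⟨fract_nonneg x, (fract_lt_one x).le⟩
  have hφ_nonneg (x : ℝ) : 0 ≤ φ (fract x) :=
    h0 ▸ hmono.monotoneOn ⟨le_rfl, zero_le_one⟩ (hmem x) (fract_nonneg x)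
  have hφ_lt_one (x : ℝ) : φ (fract x) < 1 :=
    h1 ▸ hmono (hmem x) ⟨zero_le_one, le_rfl⟩ (fract_lt_one x)
  have hstrictMono : StrictMono fun x => ⌊x⌋ + φ (fract x) := by
    intro x y hxy
    rcases (floor_mono hxy.le).eq_or_lt with heq | hlt
    · have hfract : fract x < fract y := by
        simp only [fract, heq]; linarith
      simp only [heq]
      gcongr
      exact hmono (hmem x) (hmem y) hfract
    · have : (⌊x⌋ : ℝ) + 1 ≤ ⌊y⌋ := by exact_mod_cast hlt
      linarith [hφ_lt_one x, hφ_nonneg y]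
  have hcontinuous : Continuous fun x => ⌊x⌋ + φ (fract x) := by
    have hperturb : (fun x => (⌊x⌋ : ℝ) + φ (fract x)) = fun x => x + (φ (fract x) - fract x) :=
      funext fun x => by linarith [floor_add_fract x]
    rw [hperturb]
    exact continuous_id.add ((hcont.sub continuousOn_id).comp_fract'' (by simp [h0, h1]))
  have hbound (x : ℝ) : x - 1 ≤ ⌊x⌋ + φ (fract x) ∧ ⌊x⌋ + φ (fract x) ≤ x + 1 := by
    constructor <;> linarith [floor_le x, lt_floor_add_one x, hφ_nonneg x, hφ_lt_one x]
  refine ⟨⟨hstrictMono.injective, hcontinuous.surjective ?_ ?_⟩, hstrictMono, fun x => ?_⟩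
  · exact tendsto_atTop_mono (fun x => (hbound x).1) (tendsto_atTop_add_const_right _ _ tendsto_id)
  · exact tendsto_atBot_mono (fun x => (hbound x).2) (tendsto_atBot_add_const_right _ _ tendsto_id)
  · simp only [floor_add_one, fract_add_one]
    push_cast
    ring

end IsTimedAutomorphism

theorem max_min_min_max_eq_left {α : Type*} [CommRing α] [LinearOrder α] [IsStrictOrderedRing α]
    {x y z : α} (h : (y - x) * (z - x) ≤ 0) :
    max (min x y) (min (max x y) z) = x := by
  rcases le_total x y with hxy | hxy
  · rcases (sub_nonneg.mpr hxy).eq_or_lt with h0 | h0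
    · have : y = x := by linarith
      simp [this]
    · have hz : z ≤ x := by nlinarith
      simp [hxy, hz]
  · rcases (sub_nonneg.mpr hxy).eq_or_lt with h0 | h0
    · have : y = x := by linarith
      simp [this]
    · have hz : x ≤ z := by nlinarith
      simp [hxy, hz]

/-- The median of the three lines through two of the points `(0, 0)`, `(p, p')`, `(q, q)`: it
interpolates these points and is the identity outside `[0, q]`. -/
noncomputable def bump (p p' q f : ℝ) : ℝ :=
  max (min f (p' / p * f)) (min (max f (p' / p * f)) (q + (q - p') / (q - p) * (f - q)))

section bump

variable {p p' q : ℝ}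

theorem bump_zero : bump p p' q 0 = 0 :=
  max_min_min_max_eq_left (by simp)

theorem bump_self (hp : p ≠ 0) (hpq : p ≠ q) : bump p p' q p = p' := by
  have h1 : p' / p * p = p' := div_mul_cancel₀ p' hp
  have h2 : q + (q - p') / (q - p) * (p - q) = p' := by
    field_simp [sub_ne_zero.mpr hpq.symm]; ring
  simp [bump, h1, h2]

theorem bump_of_le (hp : 0 < p) (hpq : p < q) {f : ℝ} (hf : q ≤ f) : bump p p' q f = f := by
  apply max_min_min_max_eq_left
  have e1 : p' / p * f - f = (p' - p) * f / p := by field_simp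
  have e2 : q + (q - p') / (q - p) * (f - q) - f = (p - p') * (f - q) / (q - p) := by
    field_simp [(sub_pos.mpr hpq).ne']; ring
  rw [e1, e2, div_mul_div_comm]
  apply div_nonpos_of_nonpos_of_nonneg _ (mul_nonneg hp.le (sub_pos.mpr hpq).le)
  calc (p' - p) * f * ((p - p') * (f - q)) = -(p' - p) ^ 2 * (f * (f - q)) := by ring
    _ ≤ 0 := mul_nonpos_of_nonpos_of_nonneg (by nlinarith [sq_nonneg (p' - p)])
          (mul_nonneg (by linarith) (sub_nonneg.mpr hf))

theorem strictMono_bump (hp : 0 < p) (hp' : 0 < p') (hpq : p < q) (hp'q : p' < q) :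
    StrictMono (bump p p' q) := by
  have hs₁ : 0 < p' / p := div_pos hp' hp
  have hs₂ : 0 < (q - p') / (q - p) := div_pos (sub_pos.mpr hp'q) (sub_pos.mpr hpq)
  intro x y hxy
  have h₁ : p' / p * x < p' / p * y := by gcongr
  have h₂ : q + (q - p') / (q - p) * (x - q) < q + (q - p') / (q - p) * (y - q) := by gcongr
  exact max_lt_max (min_lt_min hxy h₁) (min_lt_min (max_lt_max hxy h₁) h₂)

theorem continuous_bump : Continuous (bump p p' q) := by
  unfold bump; fun_prop

end bump

theorem exists_isTimedAutomorphism_map_eq {a u b v : ℝ} (hau : a < u) (hub : u < b)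
    (hba : b ≤ a + 1) (hv : v ∈ Ioo a b) :
    ∃ π, IsTimedAutomorphism π ∧ π u = v ∧ ∀ x, (∀ z : ℤ, x + (z : ℝ) ∉ Ioo a b) → π x = x := by
  set φ := bump (u - a) (v - a) (b - a)
  have hφ_fix {f : ℝ} (hf : b - a ≤ f) : φ f = f :=
    bump_of_le (sub_pos.mpr hau) (by linarith) hf
  have hφ_mono : StrictMono φ :=
    strictMono_bump (by linarith) (by linarith [hv.1]) (by linarith) (by linarith [hv.2])
  have hψ : IsTimedAutomorphism fun x => ⌊x⌋ + φ (fract x) :=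
    .floor_add_comp_fract (hφ_mono.strictMonoOn _) continuous_bump.continuousOn bump_zero
      (hφ_fix (by linarith))
  refine ⟨(· + a) ∘ (fun x => ⌊x⌋ + φ (fract x)) ∘ (· + -a),
    (IsTimedAutomorphism.add_const a).comp (hψ.comp (.add_const (-a))), ?_, fun x hx => ?_⟩
  · have hfract : fract (u - a) = u - a := fract_eq_self.mpr ⟨by linarith, by linarith⟩
    have hfloor : ⌊u - a⌋ = 0 := floor_eq_zero_iff.mpr ⟨by linarith, by linarith⟩
    simp only [Function.comp_apply, ← sub_eq_add_neg, hfract, hfloor, φ,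
      bump_self (sub_pos.mpr hau).ne' (by linarith : u - a ≠ b - a)]
    push_cast
    ring
  · have hφ : φ (fract (x - a)) = fract (x - a) := by
      have hshift : x + ((-⌊x - a⌋ : ℤ) : ℝ) = a + fract (x - a) := by
        rw [fract]; push_cast; ring
      have hout := hshift ▸ hx (-⌊x - a⌋)
      rcases (fract_nonneg (x - a)).eq_or_lt with h0 | hpos
      · rw [← h0]; exact bump_zero
      · exact hφ_fix (by by_contra! h; exact hout ⟨by linarith, by linarith⟩)
    simp only [Function.comp_apply, ← sub_eq_add_neg, hφ]
    linarith [floor_add_fract (x - a)]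

def intShifts (S : Set ℝ) : Set ℝ := {x | ∃ t ∈ S, ∃ z : ℤ, x = t + z}

def sOrbit (S : Set ℝ) (u : ℝ) : Set ℝ := {v | ∃ π, IsSTimedAutomorphism S π ∧ π u = v}

section orbit

variable {S : Set ℝ} {u : ℝ}

theorem fract_mem_image_fract_iff : fract u ∈ fract '' S ↔ u ∈ intShifts S := by
  simp only [mem_image, fract_eq_fract, intShifts, mem_ofPred_eq, sub_eq_iff_eq_add']
  exact ⟨fun ⟨t, ht, z, hz⟩ => ⟨t, ht, -z, by push_cast; linarith⟩,
    fun ⟨t, ht, z, hz⟩ => ⟨t, ht, -z, by push_cast; linarith⟩⟩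

theorem IsSTimedAutomorphism.map_eq_of_mem_intShifts {π : ℝ → ℝ}
    (hπ : IsSTimedAutomorphism S π) {x : ℝ} (hx : x ∈ intShifts S) : π x = x := by
  obtain ⟨t, ht, z, rfl⟩ := hx
  rw [hπ.1.map_add_int, hπ.2 t ht]

theorem sOrbit_eq_singleton (hu : u ∈ intShifts S) : sOrbit S u = {u} := by
  refine subset_antisymm ?_ (singleton_subset_iff.mpr ⟨id, ⟨?_, fun _ _ => rfl⟩, rfl⟩)
  · rintro _ ⟨π, hπ, rfl⟩
    exact hπ.map_eq_of_mem_intShifts hu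
  · exact ⟨Function.bijective_id, strictMono_id, fun _ => rfl⟩

theorem sOrbit_empty (u : ℝ) : sOrbit ∅ u = univ :=
  eq_univ_of_forall fun v =>
    ⟨(· + (v - u)), ⟨.add_const _, fun _ h => h.elim⟩, add_sub_cancel u v⟩

theorem exists_intShifts_gap (hfin : S.Finite) (hne : S.Nonempty) (hu : u ∉ intShifts S) :
    ∃ a ∈ intShifts S, ∃ b ∈ intShifts S, a < u ∧ u < b ∧ b ≤ a + 1 ∧
      ∀ x ∈ intShifts S, x ∉ Ioo a b := by
  obtain ⟨t₀, ht₀, hmax⟩ := S.exists_max_image (fun t => t + ⌊u - t⌋) hfin hne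
  obtain ⟨t₁, ht₁, hmin⟩ := S.exists_min_image (fun t => t + ⌈u - t⌉) hfin hne
  have hne_u {x : ℝ} (hx : x ∈ intShifts S) : x ≠ u := fun h => hu (h ▸ hx)
  have below {x : ℝ} (hx : x ∈ intShifts S) (hxu : x < u) : x ≤ t₀ + ⌊u - t₀⌋ := by
    obtain ⟨t, ht, z, rfl⟩ := hx
    have : z ≤ ⌊u - t⌋ := le_floor.mpr (by linarith)
    have : (z : ℝ) ≤ ⌊u - t⌋ := by exact_mod_cast this
    linarith [hmax t ht]
  have above {x : ℝ} (hx : x ∈ intShifts S) (hux : u < x) : t₁ + ⌈u - t₁⌉ ≤ x := by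
    obtain ⟨t, ht, z, rfl⟩ := hx
    have : ⌈u - t⌉ ≤ z := ceil_le.mpr (by linarith)
    have : (⌈u - t⌉ : ℝ) ≤ z := by exact_mod_cast this
    linarith [hmin t ht]
  have ha : t₀ + ⌊u - t₀⌋ ∈ intShifts S := ⟨t₀, ht₀, _, rfl⟩
  have hb : t₁ + ⌈u - t₁⌉ ∈ intShifts S := ⟨t₁, ht₁, _, rfl⟩
  have hau : t₀ + ⌊u - t₀⌋ < u :=
    (show t₀ + ⌊u - t₀⌋ ≤ u by linarith [floor_le (u - t₀)]).lt_of_ne (hne_u ha)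
  have hub : u < t₁ + ⌈u - t₁⌉ :=
    (show u ≤ t₁ + ⌈u - t₁⌉ by linarith [le_ceil (u - t₁)]).lt_of_ne (hne_u hb).symm
  refine ⟨_, ha, _, hb, hau, hub, ?_, fun x hx hxab => ?_⟩
  · have ha₁ : t₀ + ⌊u - t₀⌋ + 1 ∈ intShifts S := ⟨t₀, ht₀, ⌊u - t₀⌋ + 1, by push_cast; ring⟩
    exact above ha₁ (by linarith [lt_floor_add_one (u - t₀)])
  · rcases (hne_u hx).lt_or_gt with hxu | hux
    · linarith [below hx hxu, hxab.1]
    · linarith [above hx hux, hxab.2]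

theorem sOrbit_eq_Ioo {a b : ℝ} (ha : a ∈ intShifts S) (hb : b ∈ intShifts S) (hau : a < u)
    (hub : u < b) (hba : b ≤ a + 1) (hgap : ∀ x ∈ intShifts S, x ∉ Ioo a b) :
    sOrbit S u = Ioo a b := by
  refine subset_antisymm ?_ fun v hv => ?_
  · rintro _ ⟨π, hπ, rfl⟩
    rw [← hπ.map_eq_of_mem_intShifts ha, ← hπ.map_eq_of_mem_intShifts hb]
    exact ⟨hπ.1.2.1 hau, hπ.1.2.1 hub⟩
  · obtain ⟨π, hπ, hπu, hfix⟩ := exists_isTimedAutomorphism_map_eq hau hub hba hv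
    exact ⟨π, ⟨hπ, fun t ht => hfix t fun z => hgap _ ⟨t, ht, z, rfl⟩⟩, hπu⟩

theorem sOrbit_eq_univ_or_Ioo (hfin : S.Finite) (hu : u ∉ intShifts S) :
    (S = ∅ ∧ sOrbit S u = univ) ∨
      ∃ a b : ℝ, a ∈ intShifts S ∧ b ∈ intShifts S ∧ a < b ∧ sOrbit S u = Ioo a b := by
  rcases S.eq_empty_or_nonempty with rfl | hne
  · exact .inl ⟨rfl, sOrbit_empty u⟩
  · obtain ⟨a, ha, b, hb, hau, hub, hba, hgap⟩ := exists_intShifts_gap hfin hne hu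
    exact .inr ⟨a, b, ha, hb, hau.trans hub, sOrbit_eq_Ioo ha hb hau hub hba hgap⟩

end orbit

theorem orbit_singleton_or_open_interval_general
    (S : Set ℝ) (hfin : S.Finite)
    (u : ℝ) :
    (Int.fract u ∈ Int.fract '' S ↔
      {v | ∃ π, IsSTimedAutomorphism S π ∧ π u = v} = {u}) ∧
    (Int.fract u ∉ Int.fract '' S →
      (S = ∅ ∧ {v | ∃ π, IsSTimedAutomorphism S π ∧ π u = v} = Set.univ) ∨
      (∃ a b : ℝ, (∃ t ∈ S, ∃ z : ℤ, a = t + z) ∧ (∃ t ∈ S, ∃ z : ℤ, b = t + z) ∧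
        a < b ∧ {v | ∃ π, IsSTimedAutomorphism S π ∧ π u = v} = Set.Ioo a b)) := by
  rw [fract_mem_image_fract_iff]
  refine ⟨⟨sOrbit_eq_singleton, fun hsingle => ?_⟩, sOrbit_eq_univ_or_Ioo hfin⟩
  by_contra hu
  have hfinite : (sOrbit S u).Finite := (show sOrbit S u = {u} from hsingle) ▸ finite_singleton u
  rcases sOrbit_eq_univ_or_Ioo hfin hu with ⟨-, huniv⟩ | ⟨a, b, -, -, hab, hIoo⟩
  · exact infinite_univ (huniv ▸ hfinite)
  · exact Ioo_infinite hab (hIoo ▸ hfinite)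

/-- For finite `S ⊆ ℝ≥0` and `u ∈ ℝ≥0`, the `S`-orbit of `u` is the singleton `{u}`
exactly when the fractional part of `u` belongs to the fractional parts of `S`;
otherwise it is an open interval with endpoints of the form `t + z` (`t ∈ S`, `z ∈ ℤ`),
or the whole real line when `S` is empty. -/
theorem orbit_singleton_or_open_interval
    (S : Set ℝ) (hfin : S.Finite) (hS : ∀ t ∈ S, 0 ≤ t)
    (u : ℝ) (hu : 0 ≤ u) :
    (Int.fract u ∈ Int.fract '' S ↔
      {v | ∃ π, IsSTimedAutomorphism S π ∧ π u = v} = {u}) ∧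
    (Int.fract u ∉ Int.fract '' S →
      (S = ∅ ∧ {v | ∃ π, IsSTimedAutomorphism S π ∧ π u = v} = Set.univ) ∨
      (∃ a b : ℝ, (∃ t ∈ S, ∃ z : ℤ, a = t + z) ∧ (∃ t ∈ S, ∃ z : ℤ, b = t + z) ∧
        a < b ∧ {v | ∃ π, IsSTimedAutomorphism S π ∧ π u = v} = Set.Ioo a b)) :=
  orbit_singleton_or_open_interval_general S hfin u
end

section
/- If two reals u, v have distinct fractional parts from each other and from all elements of a finite set S ⊆ ℝ, and u, v lie in the same open interval determined by the points {s + z : s ∈ S, z ∈ ℤ} (i.e., no point of the form s + z with s ∈ S, z ∈ ℤ lies weakly between u and v), then there exists an S-timed automorphism π with π(u) = v. -/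
lemma timed_aux (a : ℝ) (φ : ℝ → ℝ) (hmono : StrictMono φ) (hcont : Continuous φ)
    (h0 : φ 0 = 0) (h1 : φ 1 = 1) :
    IsTimedAutomorphism (fun x => a + (⌊x - a⌋ : ℤ) + φ (Int.fract (x - a))) := by
  set π : ℝ → ℝ := fun x => a + (⌊x - a⌋ : ℤ) + φ (Int.fract (x - a)) with hπ
  have hb0 : ∀ x : ℝ, 0 ≤ φ (Int.fract (x - a)) := fun x => by
    rw [← h0]; exact hmono.monotone (Int.fract_nonneg _)
  have hb1 : ∀ x : ℝ, φ (Int.fract (x - a)) < 1 := fun x => by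
    rw [← h1]; exact hmono (Int.fract_lt_one _)
  have hsm : StrictMono π := by
    intro x y hxy
    have hfl : ⌊x - a⌋ ≤ ⌊y - a⌋ := Int.floor_le_floor (by linarith)
    rcases eq_or_lt_of_le hfl with heq | hlt
    · have hfr : Int.fract (x - a) < Int.fract (y - a) := by
        unfold Int.fract; rw [heq]; push_cast; linarith
      simp only [hπ, heq]
      have := hmono hfr; linarith
    · have hcast : (⌊x - a⌋ : ℝ) + 1 ≤ (⌊y - a⌋ : ℝ) := by exact_mod_cast hlt
      have := hb1 x; have := hb0 y
      simp only [hπ]; linarith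
  refine ⟨⟨hsm.injective, ?_⟩, hsm, ?_⟩
  · intro y
    have hmem : Int.fract (y - a) ∈ Set.Icc (φ 0) (φ 1) := by
      rw [h0, h1]; exact ⟨Int.fract_nonneg _, (Int.fract_lt_one _).le⟩
    obtain ⟨t, ht, hφt⟩ := intermediate_value_Icc zero_le_one hcont.continuousOn hmem
    have ht1 : t < 1 := by
      rcases lt_or_eq_of_le ht.2 with h | h
      · exact h
      · exfalso; rw [h, h1] at hφt; exact absurd hφt.symm (ne_of_lt (Int.fract_lt_one _))
    refine ⟨a + (⌊y - a⌋ : ℤ) + t, ?_⟩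
    have hx : a + (⌊y - a⌋ : ℤ) + t - a = (⌊y - a⌋ : ℤ) + t := by ring
    have hfr : Int.fract ((⌊y - a⌋ : ℝ) + t) = t := by
      rw [Int.fract_intCast_add]; exact Int.fract_eq_self.2 ⟨ht.1, ht1⟩
    have hflr : ⌊(⌊y - a⌋ : ℝ) + t⌋ = ⌊y - a⌋ := by
      rw [Int.floor_intCast_add, Int.floor_eq_zero_iff.2 ⟨ht.1, ht1⟩, add_zero]
    simp only [hπ, hx, hfr, hflr, hφt]
    have := Int.floor_add_fract (y - a)
    linarith
  · intro x
    have h1' : x + 1 - a = (x - a) + 1 := by ring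
    simp only [hπ, h1', Int.fract_add_one, Int.floor_add_one]
    push_cast; ring

lemma frac_ne_int {u s : ℝ} (h : Int.fract u ≠ Int.fract s) (z : ℤ) : u ≠ s + z := by
  intro he
  exact h (Int.fract_eq_fract.2 ⟨z, by linarith⟩)

lemma aux_main (S : Set ℝ) (hfin : S.Finite) (hne : S.Nonempty) (u v : ℝ) (hlt : u < v)
    (hu : ∀ s ∈ S, Int.fract u ≠ Int.fract s)
    (hv : ∀ s ∈ S, Int.fract v ≠ Int.fract s)
    (hbetween : ∀ s ∈ S, ∀ z : ℤ, ¬ (u ≤ s + z ∧ s + z ≤ v)) :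
    ∃ π, IsSTimedAutomorphism S π ∧ π u = v := by
  classical
  set T : Finset ℝ := hfin.toFinset with hT
  have hTne : T.Nonempty := by
    rwa [hT, Set.Finite.toFinset_nonempty]
  have hmem : ∀ s, s ∈ T ↔ s ∈ S := fun s => hfin.mem_toFinset
  set f : ℝ → ℝ := fun s => s + ((⌈u - s⌉ : ℤ) - 1) with hf
  set g : ℝ → ℝ := fun s => s + (⌈u - s⌉ : ℤ) with hg
  -- basic bounds on f and g
  have hflt : ∀ s ∈ S, u - 1 < f s ∧ f s < u := by
    intro s hs
    have hceil := Int.ceil_lt_add_one (u - s)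
    have hle : u - s < (⌈u - s⌉ : ℝ) := by
      rcases lt_or_eq_of_le (Int.le_ceil (u - s)) with h | h
      · exact h
      · exact absurd (frac_ne_int (hu s hs) ⌈u - s⌉) (by push_neg; linarith)
    constructor <;> simp only [hf] <;> push_cast <;> linarith
  have hglt : ∀ s ∈ S, u < g s ∧ g s < u + 1 := by
    intro s hs
    obtain ⟨h1, h2⟩ := hflt s hs
    constructor <;> simp only [hg, hf] at * <;> push_cast at * <;> linarith
  set a : ℝ := T.sup' hTne f with ha
  set b : ℝ := T.inf' hTne g with hb
  obtain ⟨s₀, hs₀T, hs₀⟩ := Finset.exists_mem_eq_sup' hTne f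
  obtain ⟨s₁, hs₁T, hs₁⟩ := Finset.exists_mem_eq_inf' hTne g
  have hs₀S : s₀ ∈ S := (hmem s₀).1 hs₀T
  have hs₁S : s₁ ∈ S := (hmem s₁).1 hs₁T
  have hau : a < u := by rw [ha, hs₀]; exact (hflt s₀ hs₀S).2
  have hau1 : u - 1 < a := by rw [ha, hs₀]; exact (hflt s₀ hs₀S).1
  have hub : u < b := by rw [hb, hs₁]; exact (hglt s₁ hs₁S).1
  have hba : b ≤ a + 1 := by
    have : b ≤ g s₀ := by rw [hb]; exact Finset.inf'_le _ hs₀T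
    have : g s₀ = f s₀ + 1 := by simp only [hg, hf]; push_cast; ring
    rw [ha, hs₀]; linarith
  have hvb : v < b := by
    by_contra hcon
    push_neg at hcon
    refine hbetween s₁ hs₁S ⌈u - s₁⌉ ⟨?_, ?_⟩
    · have := hub; rw [hb, hs₁] at this; simp only [hg] at this; linarith
    · rw [hb, hs₁] at hcon; simp only [hg] at hcon; linarith
  -- no point of S + ℤ strictly inside (a, b)
  have hgap : ∀ s ∈ S, Int.fract (s - a) = 0 ∨ b - a ≤ Int.fract (s - a) := by
    intro s hs
    by_contra hcon
    push_neg at hcon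
    obtain ⟨ht0, htb⟩ := hcon
    set t := Int.fract (s - a) with htdef
    have ht0' : 0 < t := lt_of_le_of_ne (Int.fract_nonneg _) (Ne.symm ht0)
    have ht1 : t < 1 := Int.fract_lt_one _
    set p : ℝ := a + t with hp
    have hps : p = s + (-⌊s - a⌋ : ℤ) := by
      have := Int.floor_add_fract (s - a)
      simp only [hp, htdef]; push_cast; linarith
    have hpa : a < p := by simp only [hp]; linarith
    have hpb : p < b := by simp only [hp]; linarith
    rcases lt_trichotomy p u with hpu | hpu | hpu
    · -- p coincides with f s, contradicting maximality of a
      have hfs : p = f s := by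
        have h1 : u - 1 < p := by linarith
        obtain ⟨h3, h4⟩ := hflt s hs
        have hint : ∃ z : ℤ, p - f s = z := by
          refine ⟨-⌊s - a⌋ - (⌈u - s⌉ - 1), ?_⟩
          rw [hps]; simp only [hf]; push_cast; ring
        obtain ⟨z, hz⟩ := hint
        have hz1 : (-1 : ℝ) < z := by rw [← hz]; linarith
        have hz2 : (z : ℝ) < 1 := by rw [← hz]; linarith
        have hz0 : z = 0 := by
          have h5 : (-1 : ℤ) < z := by exact_mod_cast hz1
          have h6 : z < 1 := by exact_mod_cast hz2
          omega
        rw [hz0] at hz; push_cast at hz; linarith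
      have : f s ≤ a := by rw [ha]; exact Finset.le_sup' f ((hmem s).2 hs)
      rw [← hfs] at this; linarith
    · exact frac_ne_int (hu s hs) _ (hpu.symm.trans hps)
    · -- p coincides with g s, contradicting minimality of b
      have hgs : p = g s := by
        obtain ⟨h3, h4⟩ := hglt s hs
        have h1 : p < u + 1 := by linarith
        have hint : ∃ z : ℤ, p - g s = z := by
          refine ⟨-⌊s - a⌋ - ⌈u - s⌉, ?_⟩
          rw [hps]; simp only [hg]; push_cast; ring
        obtain ⟨z, hz⟩ := hint
        have hz1 : (-1 : ℝ) < z := by rw [← hz]; linarith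
        have hz2 : (z : ℝ) < 1 := by rw [← hz]; linarith
        have : z = 0 := by
          have h5 : (-1 : ℤ) < z := by exact_mod_cast hz1
          have h6 : z < 1 := by exact_mod_cast hz2
          omega
        rw [this] at hz; push_cast at hz; linarith
      have : b ≤ g s := by rw [hb]; exact Finset.inf'_le g ((hmem s).2 hs)
      rw [← hgs] at this; linarith
  -- now build φ
  set c : ℝ := u - a with hc
  set L : ℝ := b - a with hL
  set d : ℝ := v - u with hd
  have hc0 : 0 < c := by simp only [hc]; linarith
  have hd0 : 0 < d := by simp only [hd]; linarith
  have hL1 : L ≤ 1 := by simp only [hL]; linarith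
  have hcL : c + d < L := by simp only [hc, hL, hd]; linarith
  set s1 : ℝ := d / c with hs1d
  set s2 : ℝ := d / (b - u) with hs2d
  have hbu : 0 < b - u := by linarith
  have hs1pos : 0 < s1 := div_pos hd0 hc0
  have hs2pos : 0 < s2 := div_pos hd0 hbu
  have hs2lt : s2 < 1 := (div_lt_one hbu).2 (by simp only [hd]; linarith)
  set φ : ℝ → ℝ := fun t => max t (min ((1 + s1) * t) ((1 - s2) * t + s2 * L)) with hφ
  have hφmono : StrictMono φ := by
    intro x y hxy
    exact max_lt_max hxy (min_lt_min
      (by nlinarith) (by nlinarith))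
  have hφcont : Continuous φ := by
    apply Continuous.max continuous_id
    exact Continuous.min (continuous_const.mul continuous_id)
      ((continuous_const.mul continuous_id).add continuous_const)
  have hL0 : 0 < L := by simp only [hL]; linarith
  have hφ0 : φ 0 = 0 := by
    simp only [hφ]
    rw [mul_zero, mul_zero, zero_add, min_eq_left (by nlinarith), max_self]
  have hφ1 : φ 1 = 1 := by
    simp only [hφ]
    rw [max_eq_left]
    refine le_trans (min_le_right _ _) ?_
    nlinarith
  have hφid : ∀ t, L ≤ t → φ t = t := by
    intro t htL
    simp only [hφ]
    rw [max_eq_left]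
    refine le_trans (min_le_right _ _) ?_
    nlinarith
  have hφc : φ c = c + d := by
    have e1 : s1 * c = d := by rw [hs1d]; field_simp
    have e2 : s2 * (b - u) = d := by rw [hs2d]; field_simp
    have hLc : L - c = b - u := by simp only [hL, hc]; ring
    have h1 : (1 + s1) * c = c + d := by linear_combination e1
    have h2 : (1 - s2) * c + s2 * L = c + d := by linear_combination s2 * hLc + e2
    simp only [hφ, h1, h2, min_self]
    exact max_eq_right (by linarith)
  obtain ⟨hbij, hsm, heq⟩ := timed_aux a φ hφmono hφcont hφ0 hφ1
  refine ⟨_, ⟨⟨hbij, hsm, heq⟩, ?_⟩, ?_⟩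
  · intro s hs
    have hfr := hgap s hs
    have hφfr : φ (Int.fract (s - a)) = Int.fract (s - a) := by
      rcases hfr with h | h
      · rw [h, hφ0]
      · exact hφid _ h
    simp only [hφfr]
    have := Int.floor_add_fract (s - a)
    linarith
  · have hfru : Int.fract (u - a) = u - a := Int.fract_eq_self.2 ⟨by linarith, by linarith⟩
    have hflu : ⌊u - a⌋ = 0 := Int.floor_eq_zero_iff.2 ⟨by linarith, by linarith⟩
    show a + ((⌊u - a⌋ : ℤ) : ℝ) + φ (Int.fract (u - a)) = v
    rw [hfru, hflu, ← hc, hφc]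
    simp only [hc, hd]
    push_cast; ring

lemma inv_auto {S : Set ℝ} {π : ℝ → ℝ} {u v : ℝ} (h : IsSTimedAutomorphism S π)
    (hpv : π v = u) : ∃ ρ, IsSTimedAutomorphism S ρ ∧ ρ u = v := by
  obtain ⟨⟨hbij, hsm, heq⟩, hfix⟩ := h
  set ρ := Function.invFun π with hρ
  have hri : Function.RightInverse ρ π := Function.rightInverse_invFun hbij.2
  have hli : Function.LeftInverse ρ π := Function.leftInverse_invFun hbij.1
  have hρmono : StrictMono ρ := by
    intro x y hxy
    by_contra hcon
    push_neg at hcon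
    have := hsm.monotone hcon
    rw [hri x, hri y] at this
    exact absurd hxy (not_lt.2 this)
  refine ⟨ρ, ⟨⟨⟨hρmono.injective, fun y => ⟨π y, hli y⟩⟩, hρmono, ?_⟩, ?_⟩, ?_⟩
  · intro x
    apply hbij.1
    rw [hri, heq, hri]
  · intro t ht
    conv_lhs => rw [← hfix t ht]
    exact hli t
  · rw [← hpv]; exact hli v

/-- If `u` and `v` have fractional parts distinct from each other and from those of all
elements of a finite set `S`, and no point of the form `s + z` (`s ∈ S`, `z ∈ ℤ`) lies
weakly between `u` and `v`, then some `S`-timed automorphism maps `u` to `v`. -/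
theorem exists_S_automorphism_mapping
    (S : Set ℝ) (hfin : S.Finite) (u v : ℝ)
    (huv : Int.fract u ≠ Int.fract v)
    (hu : ∀ s ∈ S, Int.fract u ≠ Int.fract s)
    (hv : ∀ s ∈ S, Int.fract v ≠ Int.fract s)
    (hbetween : ∀ s ∈ S, ∀ z : ℤ, ¬ (min u v ≤ s + z ∧ s + z ≤ max u v)) :
    ∃ π, IsSTimedAutomorphism S π ∧ π u = v := by
  rcases S.eq_empty_or_nonempty with hSe | hSne
  · refine ⟨fun x => x + (v - u), ⟨⟨⟨fun a b hab => by dsimp at hab; linarith,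
      fun y => ⟨y - (v - u), by ring⟩⟩, fun a b hab => by dsimp; linarith, fun x => by ring⟩,
      ?_⟩, by ring⟩
    intro t ht; rw [hSe] at ht; exact absurd ht (Set.notMem_empty t)
  · rcases lt_trichotomy u v with hlt | heq | hlt
    · apply aux_main S hfin hSne u v hlt hu hv
      intro s hs z
      have := hbetween s hs z
      rwa [min_eq_left hlt.le, max_eq_right hlt.le] at this
    · exact absurd (congrArg Int.fract heq) huv
    · obtain ⟨π, hπ, hπv⟩ := aux_main S hfin hSne v u hlt hv hu (by
        intro s hs z
        have := hbetween s hs z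
        rwa [min_eq_right hlt.le, max_eq_left hlt.le] at this)
      exact inv_auto hπ hπv
end

section
/- Special case of the decomposition claim: let F, F' ⊆ [0,1) be finite with F \ F' = {t} and F' \ F = {t'} (singletons). Then for every (F ∩ F')-timed automorphism π, there exist finitely many automorphisms π₁,...,πₙ, each either an F- or an F'-timed automorphism, such that π(t) = (πₙ ∘ ... ∘ π₁)(t). -/
/-!
Write `intTranslates S` for `S + ℤ`. An `S`-timed automorphism can move `a` to `b` as soon as no
point of `S + ℤ` lies between them: take a piecewise linear bump supported between the neighbouring
points of `S + ℤ` and extend it 1-periodically. Since `F, F' ⊆ [0, 1)`, the points of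
`(F + ℤ) ∩ (F' + ℤ)` are those of `(F ∩ F') + ℤ`; they are fixed by `π`, and `t` is not one of them,
so none lies between `t` and `π t`. The finitely many points of `(F + ℤ) ∪ (F' + ℤ)` between `t`
and `π t` are then crossed one at a time: between two consecutive ones, each endpoint misses
`F + ℤ` or `F' + ℤ`, so an `F`- or an `F'`-move takes it to the midpoint.
-/

open Set Function

def intTranslates (S : Set ℝ) : Set ℝ := {x | ∃ s ∈ S, ∃ k : ℤ, x = s + k}

lemma eq_of_add_intCast_eq {s s' : ℝ} (hs : s ∈ Ico (0 : ℝ) 1) (hs' : s' ∈ Ico (0 : ℝ) 1)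
    {k k' : ℤ} (h : s + k = s' + k') : s = s' := by
  rw [← Int.fract_eq_self.2 hs, ← Int.fract_eq_self.2 hs', ← Int.fract_add_intCast s k, h,
    Int.fract_add_intCast]

lemma mem_of_mem_intTranslates {S : Set ℝ} {x : ℝ} (hS : S ⊆ Ico 0 1) (hx : x ∈ Ico (0 : ℝ) 1)
    (hxS : x ∈ intTranslates S) : x ∈ S := by
  obtain ⟨s, hs, k, h⟩ := hxS
  rwa [eq_of_add_intCast_eq hx (hS hs) (k := 0) (by simpa using h)]

lemma intTranslates_inter_subset {A B : Set ℝ} (hA : A ⊆ Ico 0 1) (hB : B ⊆ Ico 0 1) :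
    intTranslates A ∩ intTranslates B ⊆ intTranslates (A ∩ B) := by
  rintro _ ⟨⟨a, ha, k, rfl⟩, b, hb, l, h⟩
  obtain rfl := eq_of_add_intCast_eq (hA ha) (hB hb) h
  exact ⟨a, ⟨ha, hb⟩, k, rfl⟩

lemma Set.Finite.intTranslates_inter_Icc {S : Set ℝ} (hS : S.Finite) (x y : ℝ) :
    (intTranslates S ∩ Icc x y).Finite := by
  refine (hS.biUnion fun s _ => (finite_Icc ⌈x - s⌉ ⌊y - s⌋).image fun k : ℤ => s + k).subset ?_
  rintro _ ⟨⟨s, hs, k, rfl⟩, h₁, h₂⟩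
  exact mem_biUnion hs ⟨k, ⟨Int.ceil_le.2 (by linarith), Int.le_floor.2 (by linarith)⟩, rfl⟩

lemma exists_intTranslates_lt_forall_Ioo {S : Set ℝ} (hS : S.Finite) (hne : S.Nonempty) (x : ℝ) :
    ∃ p ∈ intTranslates S, p < x ∧ ∀ z ∈ Ioo p x, z ∉ intTranslates S := by
  obtain ⟨s, hs⟩ := hne
  set p₀ := s + (⌈x - s⌉ - 1 : ℤ)
  have hp₀ : p₀ < x := by have := Int.ceil_lt_add_one (x - s); push_cast [p₀]; linarith
  obtain ⟨p, ⟨hpT, hp₀p, hpx⟩, hmax⟩ := exists_max_image (intTranslates S ∩ Ico p₀ x) id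
    ((hS.intTranslates_inter_Icc p₀ x).subset (inter_subset_inter_right _ Ico_subset_Icc_self))
    ⟨p₀, ⟨s, hs, _, rfl⟩, le_rfl, hp₀⟩
  exact ⟨p, hpT, hpx, fun z ⟨hpz, hzx⟩ hz => (hmax z ⟨hz, by linarith, hzx⟩).not_gt hpz⟩

lemma exists_lt_intTranslates_forall_Ioo {S : Set ℝ} (hS : S.Finite) (hne : S.Nonempty) (x : ℝ) :
    ∃ q ∈ intTranslates S, x < q ∧ ∀ z ∈ Ioo x q, z ∉ intTranslates S := by
  obtain ⟨s, hs⟩ := hne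
  set q₀ := s + (⌊x - s⌋ + 1 : ℤ)
  have hq₀ : x < q₀ := by have := Int.lt_floor_add_one (x - s); push_cast [q₀]; linarith
  obtain ⟨q, ⟨hqT, hxq, hqq₀⟩, hmin⟩ := exists_min_image (intTranslates S ∩ Ioc x q₀) id
    ((hS.intTranslates_inter_Icc x q₀).subset (inter_subset_inter_right _ Ioc_subset_Icc_self))
    ⟨q₀, ⟨s, hs, _, rfl⟩, hq₀, le_rfl⟩
  exact ⟨q, hqT, hxq, fun z ⟨hxz, hzq⟩ hz => (hmin z ⟨hz, hxz, by linarith⟩).not_gt hzq⟩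

lemma IsTimedAutomorphism.map_add_intCast {σ : ℝ → ℝ} (h : IsTimedAutomorphism σ) (x : ℝ)
    (k : ℤ) : σ (x + k) = σ x + k := by
  have hper : Periodic (fun y => σ y - y) 1 := fun y => by simp only [h.2.2 y]; ring
  have := hper.int_mul k x
  simp only [mul_one] at this
  linarith

lemma IsSTimedAutomorphism.map_intTranslates {S : Set ℝ} {σ : ℝ → ℝ}
    (h : IsSTimedAutomorphism S σ) {z : ℝ} (hz : z ∈ intTranslates S) : σ z = z := by
  obtain ⟨s, hs, k, rfl⟩ := hz
  rw [h.1.map_add_intCast, h.2 s hs]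

lemma IsSTimedAutomorphism.exists_leftInverse {S : Set ℝ} {σ : ℝ → ℝ}
    (h : IsSTimedAutomorphism S σ) : ∃ τ, IsSTimedAutomorphism S τ ∧ LeftInverse τ σ := by
  obtain ⟨⟨⟨-, hsurj⟩, hmono, hper⟩, hfix⟩ := h
  let e := hmono.orderIsoOfSurjective σ hsurj
  refine ⟨e.symm, ⟨⟨e.symm.bijective, e.symm.strictMono, fun x => e.injective ?_⟩,
    fun s hs => e.injective ?_⟩, e.symm_apply_apply⟩
  · change e (e.symm (x + 1)) = σ (e.symm x + 1)
    rw [hper, e.apply_symm_apply]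
    exact congrArg (· + 1) (e.apply_symm_apply x).symm
  · change e (e.symm s) = σ s
    rw [hfix s hs, e.apply_symm_apply]

lemma StrictMono.notMem_uIcc_of_apply_eq {π : ℝ → ℝ} (hπ : StrictMono π) {z t : ℝ}
    (hz : π z = z) (hzt : z ≠ t) : z ∉ uIcc t (π t) := by
  rw [mem_uIcc]
  rcases hzt.lt_or_gt with h | h
  all_goals have := hz ▸ hπ h; rintro (⟨_, _⟩ | ⟨_, _⟩) <;> linarith

lemma exists_strictMono_surjective_eqOn_compl_Ioo {p a b q : ℝ} (hpa : p < a) (hab : a ≤ b)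
    (hbq : b < q) :
    ∃ h : ℝ → ℝ, StrictMono h ∧ Surjective h ∧ h a = b ∧ ∀ y ∉ Ioo p q, h y = y := by
  obtain ⟨s₁, hs₁, hb₁⟩ : ∃ s₁, 1 ≤ s₁ ∧ p + s₁ * (a - p) = b :=
    ⟨(b - p) / (a - p), (one_le_div (by linarith)).2 (by linarith),
      by rw [div_mul_cancel₀ _ (by linarith)]; ring⟩
  obtain ⟨s₂, hs₂, hs₂', hb₂⟩ : ∃ s₂, 0 < s₂ ∧ s₂ ≤ 1 ∧ q - s₂ * (q - a) = b :=
    ⟨(q - b) / (q - a), div_pos (by linarith) (by linarith),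
      (div_le_one (by linarith)).2 (by linarith), by rw [div_mul_cancel₀ _ (by linarith)]; ring⟩
  -- the graph of `h` is the diagonal with a tent through `(p, p)`, `(a, b)`, `(q, q)` above it
  set h : ℝ → ℝ := fun y => max y (min (p + s₁ * (y - p)) (q - s₂ * (q - y)))
  have hfix : ∀ y ∉ Ioo p q, h y = y := by
    intro y hy
    rw [mem_Ioo, not_and_or, not_lt, not_lt] at hy
    refine max_eq_left ?_
    rcases hy with hy | hy
    · exact min_le_of_left_le (by nlinarith)
    · exact min_le_of_right_le (by nlinarith)
  refine ⟨h, fun x y hxy => max_lt_max hxy (min_lt_min (by nlinarith) (by nlinarith)), ?_,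
    by simp [h, hb₁, hb₂, hab], hfix⟩
  refine fun z => mem_range_of_exists_le_of_exists_ge (by fun_prop) ⟨min z p, ?_⟩ ⟨max z q, ?_⟩
  · rw [hfix _ fun hz => (min_le_right z p).not_gt hz.1]; exact min_le_left z p
  · rw [hfix _ fun hz => (le_max_right z q).not_gt hz.2]; exact le_max_left z q

/-- The map commuting with `x ↦ x + 1` that agrees with `h` on `[p, p + 1)`. -/
noncomputable def periodicExtension (h : ℝ → ℝ) (p x : ℝ) : ℝ := h (x - ⌊x - p⌋) + ⌊x - p⌋

section periodicExtension

variable {h : ℝ → ℝ} {p : ℝ}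

lemma sub_floor_sub_mem_Ico (p x : ℝ) : x - ⌊x - p⌋ ∈ Ico p (p + 1) :=
  ⟨by linarith [Int.floor_le (x - p)], by linarith [Int.lt_floor_add_one (x - p)]⟩

lemma floor_sub_eq_zero {x : ℝ} (hx : x ∈ Ico p (p + 1)) : ⌊x - p⌋ = 0 :=
  Int.floor_eq_zero_iff.2 ⟨by linarith [hx.1], by linarith [hx.2]⟩

lemma periodicExtension_of_mem_Ico {x : ℝ} (hx : x ∈ Ico p (p + 1)) :
    periodicExtension h p x = h x := by
  simp [periodicExtension, floor_sub_eq_zero hx]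

lemma periodicExtension_add_intCast (x : ℝ) (k : ℤ) :
    periodicExtension h p (x + k) = periodicExtension h p x + k := by
  simp only [periodicExtension, show x + k - p = x - p + k by ring, Int.floor_add_intCast]
  push_cast
  ring_nf

lemma StrictMono.apply_mem_Ico_iff (hmono : StrictMono h) (hp : h p = p) (hp₁ : h (p + 1) = p + 1)
    {x : ℝ} : h x ∈ Ico p (p + 1) ↔ x ∈ Ico p (p + 1) := by
  simp only [mem_Ico]
  constructor <;> rintro ⟨h₁, h₂⟩
  · exact ⟨hmono.le_iff_le.1 (hp.symm ▸ h₁), hmono.lt_iff_lt.1 (hp₁.symm ▸ h₂)⟩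
  · exact ⟨hp ▸ hmono.monotone h₁, hp₁ ▸ hmono h₂⟩

lemma strictMono_periodicExtension (hmono : StrictMono h) (hp : h p = p)
    (hp₁ : h (p + 1) = p + 1) : StrictMono (periodicExtension h p) := by
  intro x y hxy
  have hk := Int.floor_mono (sub_le_sub_right hxy.le p)
  rcases hk.eq_or_lt with hk | hk
  · simp only [periodicExtension, hk]
    linarith [hmono (sub_lt_sub_right hxy ⌊y - p⌋)]
  · have hkl : (⌊x - p⌋ : ℝ) + 1 ≤ ⌊y - p⌋ := by exact_mod_cast hk
    have hx := (hmono.apply_mem_Ico_iff hp hp₁).2 (sub_floor_sub_mem_Ico p x)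
    have hy := (hmono.apply_mem_Ico_iff hp hp₁).2 (sub_floor_sub_mem_Ico p y)
    simp only [periodicExtension]
    linarith [hx.2, hy.1]

lemma isTimedAutomorphism_periodicExtension (hmono : StrictMono h) (hsurj : Surjective h)
    (hp : h p = p) (hp₁ : h (p + 1) = p + 1) :
    IsTimedAutomorphism (periodicExtension h p) := by
  have hmono' := strictMono_periodicExtension hmono hp hp₁
  refine ⟨⟨hmono'.injective, fun z => ?_⟩, hmono', fun x => by
    exact_mod_cast periodicExtension_add_intCast x 1⟩
  obtain ⟨u, hu⟩ := hsurj (z - ⌊z - p⌋)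
  have hu' := (hmono.apply_mem_Ico_iff hp hp₁).1 (hu ▸ sub_floor_sub_mem_Ico p z)
  refine ⟨u + ⌊z - p⌋, ?_⟩
  rw [periodicExtension_add_intCast, periodicExtension_of_mem_Ico hu', hu, sub_add_cancel]

end periodicExtension

theorem exists_isSTimedAutomorphism_apply_eq {S : Set ℝ} (hS : S.Finite) {a b : ℝ}
    (hab : ∀ z ∈ uIcc a b, z ∉ intTranslates S) : ∃ σ, IsSTimedAutomorphism S σ ∧ σ a = b := by
  wlog hle : a ≤ b generalizing a b
  · obtain ⟨σ, hσ, hσb⟩ := this (by rwa [uIcc_comm]) (le_of_not_ge hle)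
    obtain ⟨τ, hτ, hτσ⟩ := hσ.exists_leftInverse
    exact ⟨τ, hτ, hσb ▸ hτσ b⟩
  rcases S.eq_empty_or_nonempty with rfl | hne
  · refine ⟨(· + (b - a)), ⟨⟨⟨add_left_injective _, fun y => ⟨y - (b - a), by ring⟩⟩,
      fun x y hxy => by simpa using hxy, fun x => by ring⟩, by simp⟩, by ring⟩
  rw [uIcc_of_le hle] at hab
  obtain ⟨p, hpT, hpa, hp⟩ := exists_intTranslates_lt_forall_Ioo hS hne a
  obtain ⟨q, -, hbq, hq⟩ := exists_lt_intTranslates_forall_Ioo hS hne b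
  have hfree : ∀ z ∈ Ioo p q, z ∉ intTranslates S := by
    intro z ⟨hpz, hzq⟩
    rcases lt_or_ge z a with hza | haz
    · exact hp z ⟨hpz, hza⟩
    rcases le_or_gt z b with hzb | hbz
    · exact hab z ⟨haz, hzb⟩
    · exact hq z ⟨hbz, hzq⟩
  have hqp : q ≤ p + 1 := by
    by_contra! h
    obtain ⟨s, hs, k, rfl⟩ := hpT
    exact hfree _ ⟨by linarith, h⟩ ⟨s, hs, k + 1, by push_cast; ring⟩
  obtain ⟨h, hmono, hsurj, hab', hfix⟩ := exists_strictMono_surjective_eqOn_compl_Ioo hpa hle hbq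
  have hp₀ : h p = p := hfix p (lt_irrefl p ∘ And.left)
  have hp₁ : h (p + 1) = p + 1 := hfix _ fun hp₁ => hqp.not_gt hp₁.2
  refine ⟨periodicExtension h p, ⟨isTimedAutomorphism_periodicExtension hmono hsurj hp₀ hp₁,
    fun s hs => ?_⟩, by rw [periodicExtension_of_mem_Ico ⟨hpa.le, by linarith⟩, hab']⟩
  have hsT : s - ⌊s - p⌋ ∈ intTranslates S := ⟨s, hs, -⌊s - p⌋, by push_cast; ring⟩
  simp only [periodicExtension]
  rw [hfix _ fun hs' => hfree _ hs' hsT, sub_add_cancel]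

def ElementaryMove (F F' : Set ℝ) (x y : ℝ) : Prop :=
  ∃ σ, (IsSTimedAutomorphism F σ ∨ IsSTimedAutomorphism F' σ) ∧ σ x = y

section ElementaryMove

variable {F F' : Set ℝ} {x y : ℝ}

lemma ElementaryMove.symm (h : ElementaryMove F F' x y) : ElementaryMove F F' y x := by
  obtain ⟨σ, hσ, rfl⟩ := h
  rcases hσ with hσ | hσ
  all_goals obtain ⟨τ, hτ, hτσ⟩ := hσ.exists_leftInverse
  exacts [⟨τ, Or.inl hτ, hτσ x⟩, ⟨τ, Or.inr hτ, hτσ x⟩]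

lemma elementaryMove_of_forall_uIcc (hF : F.Finite) (hF' : F'.Finite)
    (hx : x ∉ intTranslates F ∩ intTranslates F')
    (h : ∀ z ∈ uIcc x y, z ≠ x → z ∉ intTranslates F ∪ intTranslates F') :
    ElementaryMove F F' x y := by
  by_cases hxF : x ∈ intTranslates F
  · obtain ⟨σ, hσ, hσx⟩ := exists_isSTimedAutomorphism_apply_eq hF' fun z hz hzT =>
      (eq_or_ne z x).elim (fun hzx => hx ⟨hxF, hzx ▸ hzT⟩) fun hzx => h z hz hzx (Or.inr hzT)
    exact ⟨σ, Or.inr hσ, hσx⟩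
  · obtain ⟨σ, hσ, hσx⟩ := exists_isSTimedAutomorphism_apply_eq hF fun z hz hzT =>
      (eq_or_ne z x).elim (fun hzx => hxF (hzx ▸ hzT)) fun hzx => h z hz hzx (Or.inl hzT)
    exact ⟨σ, Or.inl hσ, hσx⟩

lemma mem_uIoo_of_mem_uIcc_midpoint {x y z : ℝ} (hxy : x ≠ y) (hz : z ∈ uIcc x ((x + y) / 2))
    (hzx : z ≠ x) : z ∈ uIoo x y := by
  rw [mem_uIcc] at hz
  rcases hxy.lt_or_gt with h | h
  · rw [uIoo_of_lt h]
    rcases hz with ⟨h₁, h₂⟩ | ⟨h₁, h₂⟩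
    · exact ⟨lt_of_le_of_ne h₁ hzx.symm, by linarith⟩
    · linarith
  · rw [uIoo_of_gt h]
    rcases hz with ⟨h₁, h₂⟩ | ⟨h₁, h₂⟩
    · linarith
    · exact ⟨by linarith, lt_of_le_of_ne h₂ hzx⟩

lemma reflTransGen_of_forall_uIoo (hF : F.Finite) (hF' : F'.Finite)
    (hx : x ∉ intTranslates F ∩ intTranslates F') (hy : y ∉ intTranslates F ∩ intTranslates F')
    (h : ∀ z ∈ uIoo x y, z ∉ intTranslates F ∪ intTranslates F') :
    Relation.ReflTransGen (ElementaryMove F F') x y := by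
  rcases eq_or_ne x y with rfl | hxy
  · exact .refl
  have hxm : ElementaryMove F F' x ((x + y) / 2) := elementaryMove_of_forall_uIcc hF hF' hx
    fun z hz hzx => h z (mem_uIoo_of_mem_uIcc_midpoint hxy hz hzx)
  have hym : ElementaryMove F F' y ((x + y) / 2) := elementaryMove_of_forall_uIcc hF hF' hy
    fun z hz hzy => h z <| uIoo_comm x y ▸
      mem_uIoo_of_mem_uIcc_midpoint hxy.symm (add_comm x y ▸ hz) hzy
  exact .tail (.single hxm) hym.symm

lemma ncard_inter_uIoo_lt {s : Set ℝ} {a b d : ℝ} (hfin : (s ∩ uIoo x y).Finite)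
    (hd : d ∈ s ∩ uIoo x y) (ha : a ∈ uIcc x y) (hb : b ∈ uIcc x y) (hdab : d ∉ uIoo a b) :
    (s ∩ uIoo a b).ncard < (s ∩ uIoo x y).ncard :=
  ncard_lt_ncard ((ssubset_iff_of_subset (inter_subset_inter_right s (uIoo_subset_Ioo ha hb))).2
    ⟨d, hd, fun h => hdab h.2⟩) hfin

theorem reflTransGen_of_forall_uIcc (hF : F.Finite) (hF' : F'.Finite)
    (h : ∀ z ∈ uIcc x y, z ∉ intTranslates F ∩ intTranslates F') :
    Relation.ReflTransGen (ElementaryMove F F') x y := by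
  set T := intTranslates F ∪ intTranslates F'
  induction hn : (T ∩ uIoo x y).ncard using Nat.strong_induction_on generalizing x y with
  | _ n ih =>
    rcases (T ∩ uIoo x y).eq_empty_or_nonempty with hD | ⟨d, hdT, hd⟩
    · exact reflTransGen_of_forall_uIoo hF hF' (h x left_mem_uIcc) (h y right_mem_uIcc)
        fun z hz hzT => hD.subset ⟨hzT, hz⟩
    have hfin : (T ∩ uIoo x y).Finite := by
      refine ((hF.intTranslates_inter_Icc (x ⊓ y) (x ⊔ y)).union
        (hF'.intTranslates_inter_Icc (x ⊓ y) (x ⊔ y))).subset ?_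
      rintro z ⟨hzT | hzT, hz⟩
      exacts [.inl ⟨hzT, uIoo_subset_uIcc_self hz⟩, .inr ⟨hzT, uIoo_subset_uIcc_self hz⟩]
    have hd' := uIoo_subset_uIcc_self hd
    refine .trans (ih _ ?_ (fun z hz => h z (uIcc_subset_uIcc_left hd' hz)) rfl)
      (ih _ ?_ (fun z hz => h z (uIcc_subset_uIcc_right hd' hz)) rfl)
    · exact hn ▸ ncard_inter_uIoo_lt hfin ⟨hdT, hd⟩ left_mem_uIcc hd' right_notMem_uIoo
    · exact hn ▸ ncard_inter_uIoo_lt hfin ⟨hdT, hd⟩ hd' right_mem_uIcc left_notMem_uIoo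

lemma exists_list_of_reflTransGen (h : Relation.ReflTransGen (ElementaryMove F F') x y) :
    ∃ l : List (ℝ → ℝ), (∀ σ ∈ l, IsSTimedAutomorphism F σ ∨ IsSTimedAutomorphism F' σ) ∧
      l.foldr (· ∘ ·) id x = y := by
  induction h with
  | refl => exact ⟨[], by simp, rfl⟩
  | tail _ hmove ih =>
    obtain ⟨l, hl, hlx⟩ := ih
    obtain ⟨σ, hσ, rfl⟩ := hmove
    exact ⟨σ :: l, by simpa [hσ] using hl, by simp [hlx]⟩

end ElementaryMove

theorem decomposition_on_single_point_general
    (F F' : Set ℝ) (hF : F.Finite) (hF' : F'.Finite)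
    (hFsub : F ⊆ Set.Ico (0 : ℝ) 1) (hF'sub : F' ⊆ Set.Ico (0 : ℝ) 1)
    (t : ℝ) (hdiff : F \ F' = {t}) :
    ∀ π, IsSTimedAutomorphism (F ∩ F') π →
      ∃ l : List (ℝ → ℝ),
        (∀ σ ∈ l, IsSTimedAutomorphism F σ ∨ IsSTimedAutomorphism F' σ) ∧
        (l.foldr (· ∘ ·) id) t = π t := by
  intro π hπ
  have ht : t ∈ F \ F' := hdiff ▸ rfl
  refine exists_list_of_reflTransGen (reflTransGen_of_forall_uIcc hF hF' fun z hz hzT => ?_)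
  have hz' := intTranslates_inter_subset hFsub hF'sub hzT
  have hzt : z ≠ t := by
    rintro rfl
    exact ht.2 (mem_of_mem_intTranslates (inter_subset_left.trans hFsub) (hFsub ht.1) hz').2
  exact hπ.1.2.1.notMem_uIcc_of_apply_eq (hπ.map_intTranslates hz') hzt hz

/-- Special case of the decomposition claim: if `F \ F' = {t}` and `F' \ F = {t'}`,
then for every `(F ∩ F')`-timed automorphism `π` there is a finite composition of
`F`- or `F'`-timed automorphisms agreeing with `π` on `t`. -/
theorem decomposition_on_single_point
    (F F' : Set ℝ) (hF : F.Finite) (hF' : F'.Finite)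
    (hFsub : F ⊆ Set.Ico (0 : ℝ) 1) (hF'sub : F' ⊆ Set.Ico (0 : ℝ) 1)
    (t t' : ℝ) (hdiff : F \ F' = {t}) (hdiff' : F' \ F = {t'}) :
    ∀ π, IsSTimedAutomorphism (F ∩ F') π →
      ∃ l : List (ℝ → ℝ),
        (∀ σ ∈ l, IsSTimedAutomorphism F σ ∨ IsSTimedAutomorphism F' σ) ∧
        (l.foldr (· ∘ ·) id) t = π t :=
  decomposition_on_single_point_general F F' hF hF' hFsub hF'sub t hdiff
end

section
/- Timed automorphisms preserve satisfaction of clock constraints under the reset-point semantics: if μ : X → ℝ, now ∈ ℝ, φ is a clock constraint (Boolean combination of atoms x − y ∼ z and x ∼ z with integer z), and the valuation x ↦ now − μ(x) satisfies φ, then for any timed automorphism π, the valuation x ↦ π(now) − π(μ(x)) also satisfies φ. -/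
/-- Comparison operators appearing in clock constraints. -/
inductive CmpOp where
  | lt | le | eq | ge | gt

def CmpOp.holds : CmpOp → ℝ → ℝ → Prop
  | .lt, a, b => a < b
  | .le, a, b => a ≤ b
  | .eq, a, b => a = b
  | .ge, a, b => a ≥ b
  | .gt, a, b => a > b

/-- Clock constraints: Boolean combinations of comparisons of clock values and of
differences of clock values with integer constants. -/
inductive ClockConstraint (X : Type*) where
  | tt : ClockConstraint X
  | ff : ClockConstraint X
  | diff : X → X → CmpOp → ℤ → ClockConstraint X
  | single : X → CmpOp → ℤ → ClockConstraint X
  | not : ClockConstraint X → ClockConstraint X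
  | and : ClockConstraint X → ClockConstraint X → ClockConstraint X
  | or : ClockConstraint X → ClockConstraint X → ClockConstraint X

/-- Satisfaction of a clock constraint by a clock valuation `ν : X → ℝ`. -/
def ClockConstraint.sat {X : Type*} (ν : X → ℝ) : ClockConstraint X → Prop
  | .tt => True
  | .ff => False
  | .diff x y c z => CmpOp.holds c (ν x - ν y) (z : ℝ)
  | .single x c z => CmpOp.holds c (ν x) (z : ℝ)
  | .not φ => ¬ ClockConstraint.sat ν φ
  | .and φ ψ => ClockConstraint.sat ν φ ∧ ClockConstraint.sat ν ψ
  | .or φ ψ => ClockConstraint.sat ν φ ∨ ClockConstraint.sat ν ψ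

/-- All integer constants of the constraint have absolute value at most `m`. -/
def ClockConstraint.constBounded {X : Type*} (m : ℕ) : ClockConstraint X → Prop
  | .tt => True
  | .ff => True
  | .diff _ _ _ z => z.natAbs ≤ m
  | .single _ _ z => z.natAbs ≤ m
  | .not φ => ClockConstraint.constBounded m φ
  | .and φ ψ => ClockConstraint.constBounded m φ ∧ ClockConstraint.constBounded m ψ
  | .or φ ψ => ClockConstraint.constBounded m φ ∧ ClockConstraint.constBounded m ψ

/-- A (nondeterministic) timed automaton over alphabet `A`, locations `Q`, clocks `X`.
A rule `(p, a, φ, Y, q)` reads letter `a` in location `p`, tests guard `φ`, resets the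
clocks in `Y` and moves to location `q`. -/
structure TimedAutomaton (A Q X : Type*) where
  init : Set Q
  final : Set Q
  rules : Set (Q × A × ClockConstraint X × Set X × Q)

/-- A configuration in the reset-point semantics: a location, a reset-point
assignment for the clocks, and the current timestamp. -/
abbrev TAConfig (Q X : Type*) := Q × (X → ℝ) × ℝ

/-- One transition of the reset-point semantics: at time `t ≥ now`, the guard of some
rule is satisfied by the valuation `x ↦ t - μ x`; clocks in the reset set get reset
point `t`, the others keep their reset points. -/
def TimedAutomaton.Step {A Q X : Type*} (Aut : TimedAutomaton A Q X)
    (c : TAConfig Q X) (e : A × ℝ) (c' : TAConfig Q X) : Prop :=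
  c'.2.2 = e.2 ∧ c.2.2 ≤ e.2 ∧
  ∃ φ Y, (c.1, e.1, φ, Y, c'.1) ∈ Aut.rules ∧
    ClockConstraint.sat (fun x => e.2 - c.2.1 x) φ ∧
    (∀ x ∈ Y, c'.2.1 x = e.2) ∧ (∀ x ∉ Y, c'.2.1 x = c.2.1 x)

/-- Runs of a timed automaton over a timed word. -/
inductive TimedAutomaton.Run {A Q X : Type*} (Aut : TimedAutomaton A Q X) :
    TAConfig Q X → List (A × ℝ) → TAConfig Q X → Prop
  | nil (c : TAConfig Q X) : Aut.Run c [] c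
  | cons {c c' c'' : TAConfig Q X} {e : A × ℝ} {w : List (A × ℝ)} :
      Aut.Step c e c' → Aut.Run c' w c'' → Aut.Run c (e :: w) c''

/-- Language of a configuration: timed words admitting an accepting run from it. -/
def TimedAutomaton.LangFrom {A Q X : Type*} (Aut : TimedAutomaton A Q X)
    (c : TAConfig Q X) : Set (List (A × ℝ)) :=
  {w | ∃ c', Aut.Run c w c' ∧ c'.1 ∈ Aut.final}

/-- Language of a timed automaton: union over initial configurations. -/
def TimedAutomaton.Lang {A Q X : Type*} (Aut : TimedAutomaton A Q X) :
    Set (List (A × ℝ)) :=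
  {w | ∃ p ∈ Aut.init, w ∈ Aut.LangFrom (p, fun _ => 0, 0)}

/-- A configuration is reachable if some run from an initial configuration ends in it. -/
def TimedAutomaton.Reachable {A Q X : Type*} (Aut : TimedAutomaton A Q X)
    (c : TAConfig Q X) : Prop :=
  ∃ p ∈ Aut.init, ∃ w, Aut.Run (p, fun _ => 0, 0) w c

/-- Determinism: unique initial location, and two rules from the same location on the
same letter with jointly satisfiable guards agree on resets and target. -/
def TimedAutomaton.IsDeterministic {A Q X : Type*} (Aut : TimedAutomaton A Q X) : Prop :=
  (∃! p, p ∈ Aut.init) ∧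
  ∀ p a φ Y q φ' Y' q', (p, a, φ, Y, q) ∈ Aut.rules → (p, a, φ', Y', q') ∈ Aut.rules →
    (∃ ν : X → ℝ, ClockConstraint.sat ν φ ∧ ClockConstraint.sat ν φ') →
    Y = Y' ∧ q = q'

/-!
A timed automorphism is a strictly monotone lift of a degree-one circle map, so it commutes
with integer translations. Hence `a - b ∼ z`, i.e. `a ∼ b + z`, holds iff
`π a ∼ π (b + z) = π b + z` does. Every atom of a clock constraint evaluated at
`x ↦ now - μ x` is such a comparison (`ν x - ν y = μ y - μ x` and `ν x = now - μ x`),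
and the Boolean connectives preserve the equivalence.
-/

namespace CmpOp

theorem holds_sub_iff (c : CmpOp) (a b r : ℝ) : c.holds (a - b) r ↔ c.holds a (b + r) := by
  cases c <;> simp only [holds, ge_iff_le, gt_iff_lt, sub_lt_iff_lt_add', lt_sub_iff_add_lt',
    sub_le_iff_le_add', le_sub_iff_add_le', sub_eq_iff_eq_add']

theorem holds_comp_strictMono_iff {f : ℝ → ℝ} (hf : StrictMono f) (c : CmpOp) (a b : ℝ) :
    c.holds (f a) (f b) ↔ c.holds a b := by
  cases c <;> simp only [holds, ge_iff_le, gt_iff_lt, hf.lt_iff_lt, hf.le_iff_le,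
    hf.injective.eq_iff]

end CmpOp

namespace IsTimedAutomorphism

variable {π : ℝ → ℝ}

def toCircleDeg1Lift (hπ : IsTimedAutomorphism π) : CircleDeg1Lift :=
  ⟨⟨π, hπ.2.1.monotone⟩, hπ.2.2⟩

theorem map_add_intCast_s13 (hπ : IsTimedAutomorphism π) (x : ℝ) (z : ℤ) :
    π (x + z) = π x + z :=
  hπ.toCircleDeg1Lift.map_add_int x z

theorem holds_sub_intCast_iff (hπ : IsTimedAutomorphism π) (c : CmpOp) (a b : ℝ) (z : ℤ) :
    c.holds (π a - π b) z ↔ c.holds (a - b) z := by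
  rw [CmpOp.holds_sub_iff, CmpOp.holds_sub_iff, ← hπ.map_add_intCast_s13,
    CmpOp.holds_comp_strictMono_iff hπ.2.1]

end IsTimedAutomorphism

theorem ClockConstraint.sat_iff_of_holds_iff {X : Type*} {ν ν' : X → ℝ}
    (hdiff : ∀ x y (c : CmpOp) (z : ℤ), c.holds (ν' x - ν' y) z ↔ c.holds (ν x - ν y) z)
    (hsingle : ∀ x (c : CmpOp) (z : ℤ), c.holds (ν' x) z ↔ c.holds (ν x) z)
    (φ : ClockConstraint X) :
    φ.sat ν' ↔ φ.sat ν := by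
  induction φ with
  | tt | ff => rfl
  | diff x y c z => exact hdiff x y c z
  | single x c z => exact hsingle x c z
  | not φ ih => exact not_congr ih
  | and φ ψ ihφ ihψ => exact and_congr ihφ ihψ
  | or φ ψ ihφ ihψ => exact or_congr ihφ ihψ

/-- Timed automorphisms preserve satisfaction of clock constraints under the
reset-point semantics. -/
theorem sat_invariant_under_timed_automorphism
    {X : Type*} (π : ℝ → ℝ) (hπ : IsTimedAutomorphism π)
    (μ : X → ℝ) (now : ℝ) (φ : ClockConstraint X)
    (h : ClockConstraint.sat (fun x => now - μ x) φ) :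
    ClockConstraint.sat (fun x => π now - π (μ x)) φ := by
  refine (ClockConstraint.sat_iff_of_holds_iff (fun x y c z => ?_)
    (fun x c z => hπ.holds_sub_intCast_iff c now (μ x) z) φ).mpr h
  simpa only [sub_sub_sub_cancel_left] using hπ.holds_sub_intCast_iff c (μ y) (μ x) z
end

section
/- The language of a configuration of a timed automaton is invariant under automorphisms fixing the clock reset points and the current time: for a configuration c = (p, μ, now), the language L(A, c) is (μ(X) ∪ {now})-invariant, i.e., π(L(A,c)) = L(A,c) for every timed automorphism π fixing all values in μ(X) ∪ {now}. Moreover if A is always resetting (every transition resets at least one clock), then every reachable configuration satisfies now ∈ μ(X), hence L(A,c) is μ(X)-invariant. -/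
/-- An automaton is always resetting if every rule resets a nonempty set of clocks. -/
def AlwaysResetting {A Q X : Type*} (Aut : TimedAutomaton A Q X) : Prop :=
  ∀ r ∈ Aut.rules, r.2.2.2.1 ≠ (∅ : Set X)

/-! Guards only compare clock values `t - μ x` and their differences `μ y - μ x` with integer
constants. A timed automorphism is strictly monotone and commutes with integer translations, so it
preserves all such comparisons and therefore maps runs to runs; if it fixes the reset points and the
current time of a configuration, it maps the language of that configuration into itself, and applying
this to its inverse gives equality. In an always resetting automaton every step gives some clock the
new current time as its reset point. -/

theorem IsTimedAutomorphism.map_add_intCast_s15 {π : ℝ → ℝ} (hπ : IsTimedAutomorphism π) (x : ℝ)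
    (z : ℤ) : π (x + z) = π x + z :=
  CircleDeg1Lift.map_add_int ⟨⟨π, hπ.2.1.monotone⟩, hπ.2.2⟩ x z

theorem CmpOp.holds_sub_iff_s15 (c : CmpOp) (a b r : ℝ) :
    CmpOp.holds c (a - b) r ↔ CmpOp.holds c a (b + r) := by
  cases c <;> simp only [CmpOp.holds, sub_lt_iff_lt_add', sub_le_iff_le_add', sub_eq_iff_eq_add',
    ge_iff_le, gt_iff_lt, le_sub_iff_add_le', lt_sub_iff_add_lt']

theorem CmpOp.holds_strictMono_iff {f : ℝ → ℝ} (hf : StrictMono f) (c : CmpOp) (a b : ℝ) :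
    CmpOp.holds c (f a) (f b) ↔ CmpOp.holds c a b := by
  cases c <;> simp only [CmpOp.holds, hf.lt_iff_lt, hf.le_iff_le, hf.injective.eq_iff, ge_iff_le,
    gt_iff_lt]

theorem IsTimedAutomorphism.cmpOp_holds_sub_iff {π : ℝ → ℝ} (hπ : IsTimedAutomorphism π)
    (c : CmpOp) (t s : ℝ) (z : ℤ) :
    CmpOp.holds c (π t - π s) z ↔ CmpOp.holds c (t - s) z := by
  rw [CmpOp.holds_sub_iff_s15, CmpOp.holds_sub_iff_s15, ← hπ.map_add_intCast_s15,
    CmpOp.holds_strictMono_iff hπ.2.1]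

theorem IsTimedAutomorphism.sat_iff {X : Type*} {π : ℝ → ℝ} (hπ : IsTimedAutomorphism π)
    (μ : X → ℝ) (t : ℝ) (φ : ClockConstraint X) :
    ClockConstraint.sat (fun x => π t - π (μ x)) φ ↔ ClockConstraint.sat (fun x => t - μ x) φ := by
  induction φ with
  | tt | ff => rfl
  | diff x y c z =>
    simp only [ClockConstraint.sat, sub_sub_sub_cancel_left]
    exact hπ.cmpOp_holds_sub_iff c _ _ z
  | single x c z => exact hπ.cmpOp_holds_sub_iff c t (μ x) z
  | not φ ih => exact not_congr ih
  | and φ ψ ih₁ ih₂ => exact and_congr ih₁ ih₂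
  | or φ ψ ih₁ ih₂ => exact or_congr ih₁ ih₂

theorem IsSTimedAutomorphism.exists_leftInverse_s15 {S : Set ℝ} {π : ℝ → ℝ}
    (hπ : IsSTimedAutomorphism S π) :
    ∃ σ, IsSTimedAutomorphism S σ ∧ Function.LeftInverse π σ := by
  obtain ⟨⟨hbij, hmono, hone⟩, hfix⟩ := hπ
  let e := hmono.orderIsoOfSurjective π hbij.2
  have he : ∀ y, π (e.symm y) = y := e.apply_symm_apply
  refine ⟨e.symm, ⟨⟨e.symm.bijective, e.symm.strictMono, fun x => ?_⟩, fun t ht => ?_⟩, he⟩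
  · exact hbij.1 (by rw [hone, he, he])
  · exact hbij.1 (by rw [he, hfix t ht])

theorem mapTW_mapTW {A : Type*} (π σ : ℝ → ℝ) (w : List (A × ℝ)) :
    mapTW π (mapTW σ w) = mapTW (π ∘ σ) w := by
  simp only [mapTW, List.map_map, Function.comp_def]

theorem mapTW_id {A : Type*} (w : List (A × ℝ)) : mapTW id w = w := by
  simp only [mapTW, id, List.map_id']

namespace TimedAutomaton

variable {A Q X : Type*} {Aut : TimedAutomaton A Q X}

def mapConf (π : ℝ → ℝ) (c : TAConfig Q X) : TAConfig Q X :=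
  (c.1, π ∘ c.2.1, π c.2.2)

theorem Step.map {π : ℝ → ℝ} (hπ : IsTimedAutomorphism π) {c c' : TAConfig Q X} {e : A × ℝ}
    (h : Aut.Step c e c') : Aut.Step (mapConf π c) (e.1, π e.2) (mapConf π c') := by
  obtain ⟨hnow, hle, φ, Y, hrule, hsat, hreset, hkeep⟩ := h
  exact ⟨congrArg π hnow, hπ.2.1.monotone hle, φ, Y, hrule, (hπ.sat_iff c.2.1 e.2 φ).2 hsat,
    fun x hx => congrArg π (hreset x hx), fun x hx => congrArg π (hkeep x hx)⟩

theorem Run.map {π : ℝ → ℝ} (hπ : IsTimedAutomorphism π) {c c' : TAConfig Q X}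
    {w : List (A × ℝ)} (h : Aut.Run c w c') : Aut.Run (mapConf π c) (mapTW π w) (mapConf π c') := by
  induction h with
  | nil c => exact Run.nil _
  | cons hs _ ih => exact Run.cons (hs.map hπ) ih

theorem image_langFrom_subset {π : ℝ → ℝ} (hπ : IsTimedAutomorphism π) (c : TAConfig Q X) :
    mapTW π '' Aut.LangFrom c ⊆ Aut.LangFrom (mapConf π c) := by
  rintro _ ⟨w, ⟨c', hrun, hfinal⟩, rfl⟩
  exact ⟨mapConf π c', hrun.map hπ, hfinal⟩

theorem mapConf_eq_self {π : ℝ → ℝ} {p : Q} {μ : X → ℝ} {now : ℝ}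
    (hπ : IsSTimedAutomorphism (Set.range μ ∪ {now}) π) : mapConf π (p, μ, now) = (p, μ, now) := by
  have hfix : ∀ t ∈ Set.range μ ∪ {now}, π t = t := hπ.2
  simp only [Set.union_singleton, Set.forall_mem_insert, Set.forall_mem_range] at hfix
  simp only [mapConf, hfix.1, Prod.mk.injEq, true_and, and_true]
  exact funext hfix.2

theorem image_langFrom_eq {π : ℝ → ℝ} (p : Q) (μ : X → ℝ) (now : ℝ)
    (hπ : IsSTimedAutomorphism (Set.range μ ∪ {now}) π) :
    mapTW π '' Aut.LangFrom (p, μ, now) = Aut.LangFrom (p, μ, now) := by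
  obtain ⟨σ, hσ, hπσ⟩ := hπ.exists_leftInverse_s15
  refine (mapConf_eq_self hπ ▸ image_langFrom_subset hπ.1 _).antisymm fun w hw => ?_
  refine ⟨mapTW σ w, mapConf_eq_self hσ ▸ image_langFrom_subset hσ.1 _ ⟨w, hw, rfl⟩, ?_⟩
  rw [mapTW_mapTW, hπσ.comp_eq_id, mapTW_id]

theorem Run.now_mem_range (hAut : AlwaysResetting Aut) {c c' : TAConfig Q X} {w : List (A × ℝ)}
    (h : Aut.Run c w c') (hc : c.2.2 ∈ Set.range c.2.1) : c'.2.2 ∈ Set.range c'.2.1 := by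
  induction h with
  | nil c => exact hc
  | cons hs _ ih =>
    obtain ⟨hnow, -, φ, Y, hrule, -, hreset, -⟩ := hs
    obtain ⟨x, hx⟩ := Set.nonempty_iff_ne_empty.2 (hAut _ hrule)
    exact ih ⟨x, (hreset x hx).trans hnow.symm⟩

theorem Reachable.now_mem_range [Nonempty X] (hAut : AlwaysResetting Aut) {c : TAConfig Q X}
    (hc : Aut.Reachable c) : c.2.2 ∈ Set.range c.2.1 := by
  obtain ⟨_, -, _, hrun⟩ := hc
  exact hrun.now_mem_range hAut ⟨Classical.arbitrary X, rfl⟩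

end TimedAutomaton

/-- The language of a configuration `(p, μ, now)` is `(μ(X) ∪ {now})`-invariant;
moreover, if the automaton is always resetting, then every reachable configuration
satisfies `now ∈ μ(X)`, and hence its language is `μ(X)`-invariant. -/
theorem lang_of_configuration_invariant
    {A Q X : Type*} [Nonempty X] (Aut : TimedAutomaton A Q X) :
    (∀ (p : Q) (μ : X → ℝ) (now : ℝ),
      ∀ π, IsSTimedAutomorphism (Set.range μ ∪ {now}) π →
        mapTW π '' Aut.LangFrom (p, μ, now) = Aut.LangFrom (p, μ, now)) ∧
    (AlwaysResetting Aut →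
      ∀ (p : Q) (μ : X → ℝ) (now : ℝ), Aut.Reachable (p, μ, now) →
        now ∈ Set.range μ ∧
        ∀ π, IsSTimedAutomorphism (Set.range μ) π →
          mapTW π '' Aut.LangFrom (p, μ, now) = Aut.LangFrom (p, μ, now)) := by
  refine ⟨fun p μ now π hπ => TimedAutomaton.image_langFrom_eq p μ now hπ,
    fun hAut p μ now hreach => ?_⟩
  have hnow : now ∈ Set.range μ := hreach.now_mem_range hAut
  refine ⟨hnow, fun π hπ => TimedAutomaton.image_langFrom_eq p μ now ?_⟩
  rwa [Set.union_singleton, Set.insert_eq_of_mem hnow]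
end
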